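/- Let G be a finite group with V_i = 1 and |G_i| = p for a prime p. Let D_i = C_G(G_{i-1}) and Y_i = Z(G). Then |G : D_i| ≤ |G_{i-1} : G_{i-1} ∩ Y_i|. -/

import Mathlib

open Subgroup
open scoped Pointwise

/-- The vanishing-off subgroup `V(G)`: generated by all `g` at which some
nonlinear irreducible character does not vanish. -/
def vanishingOff (G : Type) [Group G] : Subgroup G :=
  Subgroup.closure {g | ∃ V : FDRep ℂ G, CategoryTheory.Simple V ∧
    1 < Module.finrank ℂ V ∧ FDRep.character V g ≠ 0}

instance vanishingOff_normal (G : Type) [Group G] : (vanishingOff G).Normal := by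
  constructor
  intro n hn g
  have hset : ∀ x ∈ {g | ∃ V : FDRep ℂ G, CategoryTheory.Simple V ∧
      1 < Module.finrank ℂ V ∧ FDRep.character V g ≠ 0}, ∀ h : G,
      h * x * h⁻¹ ∈ vanishingOff G := by
    intro x hx h
    apply Subgroup.subset_closure
    obtain ⟨V, h1, h2, h3⟩ := hx
    exact ⟨V, h1, h2, by rwa [FDRep.char_conj]⟩
  induction hn using Subgroup.closure_induction with
  | mem x hx => exact hset x hx g
  | one => simpa using (vanishingOff G).one_mem
  | mul x y _ _ hx hy =>
      have : g * (x * y) * g⁻¹ = (g * x * g⁻¹) * (g * y * g⁻¹) := by group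
      rw [this]; exact mul_mem hx hy
  | inv x _ hx =>
      have : g * x⁻¹ * g⁻¹ = (g * x * g⁻¹)⁻¹ := by group
      rw [this]; exact inv_mem hx

/-- `paperV G i` is `V_i` : `V_1 = V(G)`, `V_i = [V_{i-1}, G]`. -/
def paperV (G : Type) [Group G] : ℕ → Subgroup G
  | 0 => ⊤
  | 1 => vanishingOff G
  | (n+2) => ⁅paperV G (n+1), (⊤ : Subgroup G)⁆

instance paperV_normal (G : Type) [Group G] (i : ℕ) : (paperV G i).Normal := by
  induction i with
  | zero => exact inferInstanceAs (⊤ : Subgroup G).Normal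
  | succ n ih =>
    match n, ih with
    | 0, _ => exact inferInstanceAs (vanishingOff G).Normal
    | (m+1), ih => exact Subgroup.commutator_normal _ _

/-- `paperLCS G i` is `G_i`, the `i`-th term of the lower central series with
the paper's indexing: `G_1 = G`, `G_{i+1} = [G_i, G]`. -/
def paperLCS (G : Type) [Group G] (i : ℕ) : Subgroup G := Subgroup.lowerCentralSeries (⊤ : Subgroup G) (i - 1)

instance paperLCS_normal (G : Type) [Group G] (i : ℕ) : (paperLCS G i).Normal :=
  Subgroup.lowerCentralSeries_normal (⊤ : Subgroup G) _

/-- `Y_i`, defined by `Y_i/V_i = Z(G/V_i)`. -/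
def paperY (G : Type) [Group G] (i : ℕ) : Subgroup G :=
  (Subgroup.center (G ⧸ paperV G i)).comap (QuotientGroup.mk' (paperV G i))

instance paperY_normal (G : Type) [Group G] (i : ℕ) : (paperY G i).Normal :=
  Subgroup.Normal.comap inferInstance _

/-- `D_i`, defined by `D_i/V_i = C_{G/V_i}(G_{i-1}/V_i)`. -/
def paperD (G : Type) [Group G] (i : ℕ) : Subgroup G :=
  (Subgroup.centralizer (((paperLCS G (i-1)).map (QuotientGroup.mk' (paperV G i))) :
      Set (G ⧸ paperV G i))).comap (QuotientGroup.mk' (paperV G i))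

instance paperLCSinfY_normal (G : Type) [Group G] (i j : ℕ) :
    (paperLCS G i ⊓ paperY G j).Normal := Subgroup.normal_inf_normal _ _

/-- `E_i`, defined by `E_i/(G_{i-1} ∩ Y_i) = C_{G/(G_{i-1} ∩ Y_i)}(G_{i-2}/(G_{i-1} ∩ Y_i))`. -/
def paperE (G : Type) [Group G] (i : ℕ) : Subgroup G :=
  (Subgroup.centralizer (((paperLCS G (i-2)).map
      (QuotientGroup.mk' (paperLCS G (i-1) ⊓ paperY G i))) :
      Set (G ⧸ (paperLCS G (i-1) ⊓ paperY G i)))).comap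
    (QuotientGroup.mk' (paperLCS G (i-1) ⊓ paperY G i))

/-- `G_i` is `H_1`: for every normal `N` with `V_i ≤ N < G_i`,
`V_{i-1}/N = (G_{i-1}/N) ∩ Z(G/N)`. -/
def IsH1 (G : Type) [Group G] (i : ℕ) : Prop :=
  ∀ (N : Subgroup G) (hN : N.Normal), paperV G i ≤ N → N < paperLCS G i →
    letI := hN
    (paperV G (i-1)).map (QuotientGroup.mk' N) =
      (paperLCS G (i-1)).map (QuotientGroup.mk' N) ⊓ Subgroup.center (G ⧸ N)
open scoped commutatorElement

private lemma comm_mul_left {G : Type} [Group G] (a b g : G)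
    (h : a * ⁅b, g⁆ = ⁅b, g⁆ * a) : ⁅a * b, g⁆ = ⁅b, g⁆ * ⁅a, g⁆ := by
  have h1 : ⁅a * b, g⁆ = a * ⁅b, g⁆ * (g * a⁻¹ * g⁻¹) := by group
  rw [h1, h]; group


private lemma card_linearMap {F V W : Type} [Field F] [Finite F] [AddCommGroup V]
    [AddCommGroup W] [Module F V] [Module F W] [Finite V]
    (hW : Nat.card W = Nat.card F) : Nat.card (V →ₗ[F] W) = Nat.card V := by
  haveI : Module.Finite F V := Module.Finite.of_finite
  let bas := Module.finBasis F V
  let n := Module.finrank F V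
  calc Nat.card (V →ₗ[F] W)
      = Nat.card (Fin n → W) := (Nat.card_congr (bas.constr ℕ).toEquiv).symm
    _ = Nat.card W ^ n := by rw [Nat.card_fun]; simp
    _ = Nat.card F ^ n := by rw [hW]
    _ = Nat.card (Fin n → F) := by rw [Nat.card_fun]; simp
    _ = Nat.card V := (Nat.card_congr bas.equivFun.toEquiv).symm

private lemma card_hom_eq {p : ℕ} (hp : p.Prime) (A Pt : Type) [CommGroup A] [CommGroup Pt]
    [Finite A] (hA : ∀ a : A, a ^ p = 1) (hPt : ∀ x : Pt, x ^ p = 1)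
    (hP : Nat.card Pt = p) : Nat.card (A →* Pt) = Nat.card A := by
  haveI : Fact p.Prime := ⟨hp⟩
  haveI : NeZero p := ⟨hp.ne_zero⟩
  haveI : Finite (Additive A) := Finite.of_equiv _ Additive.ofMul
  letI mA : Module (ZMod p) (Additive A) := AddCommGroup.zmodModule (by
    intro x
    apply Additive.toMul.injective
    rw [toMul_nsmul, toMul_zero]
    exact hA _)
  letI : Module (ZMod p) (Additive Pt) := AddCommGroup.zmodModule (by
    intro x
    apply Additive.toMul.injective
    rw [toMul_nsmul, toMul_zero]
    exact hPt _)
  let e2 : (Additive A →+ Additive Pt) ≃ (Additive A →ₗ[ZMod p] Additive Pt) :=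
    { toFun := fun f =>
        { toFun := f
          map_add' := f.map_add
          map_smul' := by
            intro c x
            obtain ⟨m, rfl⟩ := ZMod.natCast_zmod_surjective c
            simp only [RingHom.id_apply]
            rw [Nat.cast_smul_eq_nsmul, Nat.cast_smul_eq_nsmul, map_nsmul] }
      invFun := fun f => f.toAddMonoidHom
      left_inv := fun f => rfl
      right_inv := fun f => rfl }
  calc Nat.card (A →* Pt)
      = Nat.card (Additive A →+ Additive Pt) := Nat.card_congr MonoidHom.toAdditive
    _ = Nat.card (Additive A →ₗ[ZMod p] Additive Pt) := Nat.card_congr e2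
    _ = Nat.card (Additive A) := card_linearMap
        ((Nat.card_congr Additive.toMul).trans (hP.trans (Nat.card_zmod p).symm))
    _ = Nat.card A := Nat.card_congr Additive.toMul

private lemma key_lemma {G : Type} [Group G] [Finite G] {p : ℕ} (hp : p.Prime)
    (H P : Subgroup G) (hPcard : Nat.card P = p)
    (hHP : ∀ x ∈ H, ∀ n ∈ P, x * n = n * x)
    (hcomm : ∀ x ∈ H, ∀ g : G, ⁅x, g⁆ ∈ P) :
    (Subgroup.centralizer (H : Set G)).index ≤ (Subgroup.center G).relIndex H := by
  haveI : Fact p.Prime := ⟨hp⟩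
  haveI : IsCyclic ↥P := isCyclic_of_prime_card hPcard
  letI : CommGroup ↥P := IsCyclic.commGroup
  have hPcomm : ∀ a b : G, a ∈ P → b ∈ P → a * b = b * a := fun a b ha hb =>
    congrArg Subtype.val (mul_comm (⟨a, ha⟩ : ↥P) ⟨b, hb⟩)
  set C := Subgroup.centralizer (H : Set G) with hC
  -- the pairing homs
  let φ : G → (↥H →* ↥P) := fun g =>
    { toFun := fun x => ⟨⁅(x : G), g⁆, hcomm x x.2 g⟩
      map_one' := by
        ext
        show ⁅((1 : ↥H) : G), g⁆ = 1
        simp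
      map_mul' := fun x y => by
        ext
        show ⁅((x : G) * (y : G)), g⁆ = ⁅(x : G), g⁆ * ⁅(y : G), g⁆
        have h1 : (x : G) * ⁅(y : G), g⁆ = ⁅(y : G), g⁆ * (x : G) :=
          hHP x x.2 _ (hcomm y y.2 g)
        rw [comm_mul_left _ _ _ h1]
        exact hPcomm _ _ (hcomm y y.2 g) (hcomm x x.2 g) }
  set Z := (Subgroup.center G).subgroupOf H with hZ
  let ψ : G → ((↥H ⧸ Z) →* ↥P) := fun g => QuotientGroup.lift Z (φ g) (by
    intro x hx
    ext
    show ⁅(x : G), g⁆ = 1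
    exact commutatorElement_eq_one_iff_commute.mpr
      ((Subgroup.mem_center_iff.mp (Subgroup.mem_subgroupOf.mp hx) g).symm))
  have hψmk : ∀ (g : G) (x : ↥H), (ψ g (QuotientGroup.mk x) : G) = ⁅(x : G), g⁆ :=
    fun g x => rfl
  have hkey : ∀ (x : G), x ∈ H → ∀ g c : G, c ∈ C → ⁅x, g * c⁆ = ⁅x, g⁆ := by
    intro x hx g c hc
    have h1 : x⁻¹ * c = c * x⁻¹ :=
      Subgroup.mem_centralizer_iff.mp hc x⁻¹ (SetLike.mem_coe.mpr (inv_mem hx))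
    have h2 : ⁅x, g * c⁆ = x * g * (c * x⁻¹) * (c⁻¹ * g⁻¹) := by group
    rw [h2, ← h1]; group
  let Φ : (G ⧸ C) → ((↥H ⧸ Z) →* ↥P) := Quotient.lift ψ (by
    intro g g' hgg'
    have hgg2 : g⁻¹ * g' ∈ C := QuotientGroup.leftRel_apply.mp hgg'
    have hg' : g' = g * (g⁻¹ * g') := by group
    refine MonoidHom.ext fun b => ?_
    refine QuotientGroup.induction_on b fun x => ?_
    refine Subtype.ext ?_
    rw [hψmk, hψmk, hg', hkey (x : G) x.2 g _ hgg2])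
  have hΦinj : Function.Injective Φ := by
    intro q q'
    refine Quotient.inductionOn₂ q q' ?_
    intro g g' h
    have h' : ψ g = ψ g' := h
    apply Quotient.sound
    refine QuotientGroup.leftRel_apply.mpr ?_
    rw [Subgroup.mem_centralizer_iff]
    intro y hy
    have hxy : ⁅y, g⁆ = ⁅y, g'⁆ := by
      have := DFunLike.congr_fun h' (QuotientGroup.mk (⟨y, hy⟩ : ↥H))
      have := congrArg Subtype.val this
      rwa [hψmk, hψmk] at this
    rw [commutatorElement_def, commutatorElement_def] at hxy
    have h2 : g⁻¹ * g' * y⁻¹ = y⁻¹ * (g⁻¹ * g') := by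
      calc g⁻¹ * g' * y⁻¹
          = g⁻¹ * (y⁻¹ * (y * g' * y⁻¹ * g'⁻¹)) * g' := by group
        _ = g⁻¹ * (y⁻¹ * (y * g * y⁻¹ * g⁻¹)) * g' := by rw [hxy]
        _ = y⁻¹ * (g⁻¹ * g') := by group
    have h3 : y * (g⁻¹ * g') = y * (g⁻¹ * g' * y⁻¹) * y := by group
    rw [h3, h2]; group
  haveI : Finite (↥H ⧸ Z) := Quotient.finite _
  haveI : Finite ((↥H ⧸ Z) →* ↥P) :=
    Finite.of_injective (fun f => (f : ↥H ⧸ Z → ↥P)) DFunLike.coe_injective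
  have hle1 : C.index ≤ Nat.card ((↥H ⧸ Z) →* ↥P) := by
    rw [Subgroup.index_eq_card]
    exact Nat.card_le_card_of_injective Φ hΦinj
  -- exponent p facts
  have hBpow : ∀ b : ↥H ⧸ Z, b ^ p = 1 := by
    intro b
    refine QuotientGroup.induction_on b ?_
    intro x
    have : ((QuotientGroup.mk x : ↥H ⧸ Z)) ^ p = QuotientGroup.mk (x ^ p) := rfl
    rw [this, QuotientGroup.eq_one_iff]
    rw [hZ, Subgroup.mem_subgroupOf, Subgroup.mem_center_iff]
    intro g
    have h4 : ((φ g) (x ^ p) : G) = 1 := by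
      rw [map_pow]
      have h5 : (φ g x) ^ Nat.card ↥P = 1 := pow_card_eq_one'
      rw [hPcard] at h5
      rw [h5, Subgroup.coe_one]
    have h6 : Commute ((x ^ p : ↥H) : G) g := commutatorElement_eq_one_iff_commute.mp h4
    exact h6.symm
  have hof_surj : Function.Surjective
      (Abelianization.of : (↥H ⧸ Z) → Abelianization (↥H ⧸ Z)) :=
    fun a => QuotientGroup.induction_on a fun b => ⟨b, rfl⟩
  have hApow : ∀ a : Abelianization (↥H ⧸ Z), a ^ p = 1 := by
    intro a
    obtain ⟨b, rfl⟩ := hof_surj a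
    rw [← map_pow, hBpow b, map_one]
  have hPpow : ∀ x : ↥P, x ^ p = 1 := by
    intro x
    have h5 : x ^ Nat.card ↥P = 1 := pow_card_eq_one'
    rwa [hPcard] at h5
  haveI : Finite (Abelianization (↥H ⧸ Z)) := Quotient.finite _
  have hcard1 : Nat.card (Abelianization (↥H ⧸ Z) →* ↥P)
      = Nat.card (Abelianization (↥H ⧸ Z)) :=
    card_hom_eq hp _ _ hApow hPpow hPcard
  have hle2 : Nat.card (Abelianization (↥H ⧸ Z)) ≤ Nat.card (↥H ⧸ Z) :=
    Nat.card_le_card_of_surjective _ hof_surj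
  have hrel : (Subgroup.center G).relIndex H = Nat.card (↥H ⧸ Z) :=
    Subgroup.index_eq_card _
  calc C.index ≤ Nat.card ((↥H ⧸ Z) →* ↥P) := hle1
    _ = Nat.card (Abelianization (↥H ⧸ Z) →* ↥P) := Nat.card_congr Abelianization.lift
    _ = Nat.card (Abelianization (↥H ⧸ Z)) := hcard1
    _ ≤ Nat.card (↥H ⧸ Z) := hle2
    _ = (Subgroup.center G).relIndex H := hrel.symm

private lemma commutator_le_centralizer {G : Type} [Group G] {p : ℕ} (hp : p.Prime)
    (P : Subgroup G) [P.Normal] (hPcard : Nat.card P = p) :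
    commutator G ≤ Subgroup.centralizer (P : Set G) := by
  haveI : Fact p.Prime := ⟨hp⟩
  haveI : IsCyclic ↥P := isCyclic_of_prime_card hPcard
  rw [commutator_def, Subgroup.commutator_le]
  intro a _ b _
  rw [Subgroup.mem_centralizer_iff]
  intro y hy
  have hcomm : Commute (MulAut.conjNormal (H := P) a) (MulAut.conjNormal (H := P) b) := by
    obtain ⟨s, hs⟩ := MonoidHom.map_cyclic (MulAut.conjNormal (H := P) a).toMonoidHom
    obtain ⟨t, ht⟩ := MonoidHom.map_cyclic (MulAut.conjNormal (H := P) b).toMonoidHom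
    have hs' : ∀ g : ↥P, MulAut.conjNormal (H := P) a g = g ^ s := fun g => by
      simpa using hs g
    have ht' : ∀ g : ↥P, MulAut.conjNormal (H := P) b g = g ^ t := fun g => by
      simpa using ht g
    unfold Commute SemiconjBy
    refine MulEquiv.ext fun x => ?_
    calc (MulAut.conjNormal (H := P) a * MulAut.conjNormal (H := P) b) x
        = (x ^ t) ^ s := by rw [MulAut.mul_apply, ht', hs']
      _ = x ^ (t * s) := by rw [← zpow_mul]
      _ = (x ^ s) ^ t := by rw [← zpow_mul, mul_comm]
      _ = (MulAut.conjNormal (H := P) b * MulAut.conjNormal (H := P) a) x := by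
          rw [MulAut.mul_apply, hs', ht']
  have h1 : MulAut.conjNormal (H := P) ⁅a, b⁆ = 1 := by
    rw [map_commutatorElement]
    exact commutatorElement_eq_one_iff_commute.mpr hcomm
  have h2 : ⁅a, b⁆ * y * ⁅a, b⁆⁻¹ = y := by
    have := congrArg (fun f : MulAut ↥P => ((f ⟨y, hy⟩ : ↥P) : G)) h1
    simp only [MulAut.conjNormal_apply, MulAut.one_apply] at this
    exact this
  have h3 : ⁅a, b⁆ * y = y * ⁅a, b⁆ := by
    conv_rhs => rw [← h2]
    group
  exact h3.symm

theorem stmt6 (G : Type) [Group G] [Finite G] (i : ℕ) (hi : 2 ≤ i)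
    (hV : paperV G i = ⊥) (p : ℕ) (hp : p.Prime)
    (hcard : Nat.card (paperLCS G i) = p) :
    (Subgroup.centralizer (paperLCS G (i-1) : Set G)).index ≤
      (Subgroup.center G).relIndex (paperLCS G (i-1)) := by
  rcases Nat.lt_or_ge i 3 with h3 | h3
  · -- i = 2 : both sides are the index of the center
    have hi2 : i = 2 := by omega
    subst hi2
    have hT : paperLCS G (2-1) = ⊤ := rfl
    rw [hT, Subgroup.coe_top, Subgroup.centralizer_univ, Subgroup.relIndex_top_right]
  · -- i ≥ 3
    have hH : paperLCS G (i-1) = (⊤ : Subgroup G).lowerCentralSeries (i-2) := by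
      have he2 : i - 1 - 1 = i - 2 := by omega
      show (⊤ : Subgroup G).lowerCentralSeries (i-1-1) = _
      rw [he2]
    have hPcard : Nat.card ((⊤ : Subgroup G).lowerCentralSeries (i-1)) = p := hcard
    rw [hH]
    have hG' := commutator_le_centralizer hp ((⊤ : Subgroup G).lowerCentralSeries (i-1)) hPcard
    have hHG' : (⊤ : Subgroup G).lowerCentralSeries (i-2) ≤ commutator G := by
      have h4 := Subgroup.lowerCentralSeries_antitone (⊤ : Subgroup G) (show 1 ≤ i - 2 by omega)
      rwa [Subgroup.top_lowerCentralSeries_one] at h4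
    refine key_lemma hp _ ((⊤ : Subgroup G).lowerCentralSeries (i-1)) hPcard ?_ ?_
    · intro x hx n hn
      exact (Subgroup.mem_centralizer_iff.mp (hG' (hHG' hx)) n hn).symm
    · intro x hx g
      have he : i - 2 + 1 = i - 1 := by omega
      have h5 : ⁅x, g⁆ ∈ (⊤ : Subgroup G).lowerCentralSeries (i-2+1) := by
        rw [Subgroup.lowerCentralSeries_succ]
        exact Subgroup.commutator_mem_commutator hx (Subgroup.mem_top g)
      rwa [he] at h5
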